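/- arXiv:2501.19208 — 2 statements merged into one kernel-verified Lean document; each statement's English description precedes it below -/
import Mathlib

section
/- Let n ≥ 1, δ > 0, p₀ ∈ (0,1], l₀ > 0, and let l = (l_{ij}) satisfy l_{ij} ≥ l₀ for all i, j. Let (Ω, F, μ) be a probability space, let d : Ω → ℝ_{≥0}^n be a bounded measurable random vector, and let P : Ω → [0,1]^{n×n} be a measurable random matrix that is row-stochastic almost surely (∑_{j=1}^n P_{ij} = 1 for every i, a.s.). Suppose μ( d_i ≥ 1/n + δ ) ≥ p₀ for every i = 1,…,n. Then for every y ∈ Δ_{n−1}: E[ ∑_{i,j=1}^n l_{ij} P_{ij} (d_i − y_i)^+ ] ≥ l₀ · p₀ · n · δ. -/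
open MeasureTheory

theorem stmt16 (n : ℕ) (hn : 1 ≤ n)
    (δ p₀ l₀ : ℝ) (hδ : 0 < δ) (hp₀ : p₀ ∈ Set.Ioc (0 : ℝ) 1) (hl₀ : 0 < l₀)
    (l : Fin n → Fin n → ℝ) (hl : ∀ i j, l₀ ≤ l i j)
    {Ω : Type*} [MeasurableSpace Ω] (μ : Measure Ω) [IsProbabilityMeasure μ]
    (d : Ω → Fin n → ℝ) (hdmeas : Measurable d)
    (hdnonneg : ∀ ω i, 0 ≤ d ω i) (hdbdd : ∃ B : ℝ, ∀ ω i, d ω i ≤ B)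
    (P : Ω → Fin n → Fin n → ℝ) (hPmeas : Measurable P)
    (hPrange : ∀ ω i j, P ω i j ∈ Set.Icc (0 : ℝ) 1)
    (hPstoch : ∀ᵐ ω ∂μ, ∀ i, (∑ j, P ω i j) = 1)
    (hld : ∀ i : Fin n, ENNReal.ofReal p₀ ≤ μ {ω | 1 / (n : ℝ) + δ ≤ d ω i})
    (y : Fin n → ℝ) (hy : y ∈ stdSimplex ℝ (Fin n)) :
    l₀ * p₀ * n * δ
      ≤ ∫ ω, (∑ i, ∑ j, l i j * P ω i j * max (d ω i - y i) 0) ∂μ := by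
  obtain ⟨B, hB⟩ := hdbdd
  set h : Fin n → Ω → ℝ := fun i ω => max (d ω i - y i) 0 with hh
  have hmeas_h : ∀ i, Measurable (h i) := fun i =>
    ((hdmeas.eval (a := i)).sub measurable_const).max measurable_const
  have h_nonneg : ∀ i ω, 0 ≤ h i ω := fun i ω => le_max_right _ _
  have hbdd_h : ∀ i ω, h i ω ≤ max B 0 := fun i ω =>
    max_le_max (by linarith [hB ω i, hy.1 i]) le_rfl
  have hint_h : ∀ i, Integrable (h i) μ := by
    intro i
    refine Integrable.mono' (integrable_const (max B 0)) (hmeas_h i).aestronglyMeasurable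
      (ae_of_all _ fun ω => ?_)
    rw [Real.norm_eq_abs, abs_of_nonneg (h_nonneg i ω)]
    exact hbdd_h i ω
  have hmeas_P : ∀ i j, Measurable fun ω => P ω i j := fun i j =>
    (hPmeas.eval (a := i)).eval (a := j)
  have hintF : Integrable (fun ω => ∑ i, ∑ j, l i j * P ω i j * h i ω) μ := by
    refine integrable_finset_sum _ fun i _ => integrable_finset_sum _ fun j _ => ?_
    refine Integrable.mono' (integrable_const (|l i j| * max B 0))
      (((measurable_const.mul (hmeas_P i j)).mul (hmeas_h i)).aestronglyMeasurable)
      (ae_of_all _ fun ω => ?_)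
    rw [Real.norm_eq_abs, abs_mul, abs_mul]
    have h1 : |P ω i j| ≤ 1 := abs_le.2 ⟨by linarith [(hPrange ω i j).1], (hPrange ω i j).2⟩
    have h2 : |h i ω| ≤ max B 0 := by
      rw [abs_of_nonneg (h_nonneg i ω)]; exact hbdd_h i ω
    calc |l i j| * |P ω i j| * |h i ω| ≤ |l i j| * 1 * |h i ω| := by
            apply mul_le_mul_of_nonneg_right (mul_le_mul_of_nonneg_left h1 (abs_nonneg _)) (abs_nonneg _)
      _ = |l i j| * |h i ω| := by ring
      _ ≤ |l i j| * max B 0 := mul_le_mul_of_nonneg_left h2 (abs_nonneg _)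
  have hintG : Integrable (fun ω => l₀ * ∑ i, h i ω) μ :=
    (integrable_finset_sum _ fun i _ => hint_h i).const_mul l₀
  -- Step 1: a.e. bound
  have hGF : (fun ω => l₀ * ∑ i, h i ω) ≤ᵐ[μ] (fun ω => ∑ i, ∑ j, l i j * P ω i j * h i ω) := by
    filter_upwards [hPstoch] with ω hω
    rw [Finset.mul_sum]
    refine Finset.sum_le_sum fun i _ => ?_
    have : l₀ * h i ω = ∑ j, l₀ * (P ω i j * h i ω) := by
      rw [← Finset.mul_sum, ← Finset.sum_mul, hω i, one_mul]
    rw [this]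
    refine Finset.sum_le_sum fun j _ => ?_
    rw [mul_assoc]
    exact mul_le_mul_of_nonneg_right (hl i j)
      (mul_nonneg (hPrange ω i j).1 (h_nonneg i ω))
  have step1 : ∫ ω, (l₀ * ∑ i, h i ω) ∂μ
      ≤ ∫ ω, (∑ i, ∑ j, l i j * P ω i j * h i ω) ∂μ :=
    integral_mono_ae hintG hintF hGF
  -- Step 2: lower bound each ∫ h i
  have hA : ∀ i : Fin n, MeasurableSet {ω | 1 / (n : ℝ) + δ ≤ d ω i} := fun i =>
    measurableSet_le measurable_const (hdmeas.eval (a := i))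
  have hμA : ∀ i : Fin n, p₀ ≤ (μ {ω | 1 / (n : ℝ) + δ ≤ d ω i}).toReal := by
    intro i
    have hne : μ {ω | 1 / (n : ℝ) + δ ≤ d ω i} ≠ ⊤ := measure_ne_top μ _
    exact (ENNReal.ofReal_le_iff_le_toReal hne).1 (hld i)
  have step2 : ∀ i : Fin n, (1 / (n : ℝ) + δ - y i) * p₀ ≤ ∫ ω, h i ω ∂μ := by
    intro i
    set c : ℝ := max (1 / (n : ℝ) + δ - y i) 0 with hc
    have hind : ∀ ω, ({ω | 1 / (n : ℝ) + δ ≤ d ω i}).indicator (fun _ => c) ω ≤ h i ω := by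
      intro ω
      by_cases hω : ω ∈ {ω | 1 / (n : ℝ) + δ ≤ d ω i}
      · rw [Set.indicator_of_mem hω]
        exact max_le_max (by simpa using sub_le_sub_right hω (y i)) le_rfl
      · rw [Set.indicator_of_notMem hω]; exact h_nonneg i ω
    have hintind : Integrable (({ω | 1 / (n : ℝ) + δ ≤ d ω i}).indicator (fun _ => c)) μ :=
      (integrable_const c).indicator (hA i)
    have := integral_mono hintind (hint_h i) hind
    rw [integral_indicator_const c (hA i), smul_eq_mul] at this
    refine le_trans ?_ this
    have hc0 : 0 ≤ c := le_max_right _ _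
    calc (1 / (n : ℝ) + δ - y i) * p₀ ≤ c * p₀ :=
          mul_le_mul_of_nonneg_right (le_max_left _ _) hp₀.1.le
      _ ≤ (μ {ω | 1 / (n : ℝ) + δ ≤ d ω i}).toReal * c := by
          rw [mul_comm]
          exact mul_le_mul_of_nonneg_right (hμA i) hc0
  -- combine
  have hn0 : (n : ℝ) ≠ 0 := by positivity
  have key : l₀ * p₀ * n * δ ≤ l₀ * ∑ i, ∫ ω, h i ω ∂μ := by
    have hsum : ∑ i : Fin n, ((1 / (n : ℝ) + δ - y i) * p₀) = p₀ * n * δ := by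
      rw [← Finset.sum_mul]
      have : ∑ i : Fin n, (1 / (n : ℝ) + δ - y i)
          = (n : ℝ) * (1 / (n : ℝ) + δ) - 1 := by
        rw [Finset.sum_sub_distrib, Finset.sum_const, Finset.card_univ, Fintype.card_fin,
          hy.2, nsmul_eq_mul]
      rw [this]
      field_simp
      ring
    calc l₀ * p₀ * n * δ = l₀ * (p₀ * n * δ) := by ring
      _ = l₀ * ∑ i : Fin n, ((1 / (n : ℝ) + δ - y i) * p₀) := by rw [hsum]
      _ ≤ l₀ * ∑ i, ∫ ω, h i ω ∂μ := by
          exact mul_le_mul_of_nonneg_left (Finset.sum_le_sum fun i _ => step2 i) hl₀.le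
  have hGint : ∫ ω, (l₀ * ∑ i, h i ω) ∂μ = l₀ * ∑ i, ∫ ω, h i ω ∂μ := by
    rw [integral_const_mul, integral_finset_sum _ fun i _ => hint_h i]
  calc l₀ * p₀ * n * δ ≤ l₀ * ∑ i, ∫ ω, h i ω ∂μ := key
    _ = ∫ ω, (l₀ * ∑ i, h i ω) ∂μ := hGint.symm
    _ ≤ _ := step1
end

section
/- Let t ≥ 1, let d₁ ≤ d₂ ≤ … ≤ d_t be reals in [0,1], let S ∈ [0,1], and let m ∈ ℝ^t. Then the following are equivalent. (a) m_s = min(S, d_s) for every s = 1,…,t. (b) There exists z ∈ {0,1}^{t+1} with ∑_{s=1}^{t+1} z_s = 1 such that: ∑_{s=1}^{t} z_{s+1} d_s ≤ S ≤ ∑_{s=1}^{t} z_s d_s + z_{t+1}; −2(1 − z_{s'}) ≤ m_s − S ≤ 2(1 − z_{s'}) for all 1 ≤ s' ≤ s ≤ t; and −2(1 − z_{s'}) ≤ m_s − d_s ≤ 2(1 − z_{s'}) for all 1 ≤ s < s' ≤ t + 1. -/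
theorem stmt18 (t : ℕ) (ht : 1 ≤ t)
    (d : ℕ → ℝ)
    (hd01 : ∀ s, 1 ≤ s → s ≤ t → d s ∈ Set.Icc (0 : ℝ) 1)
    (hsorted : ∀ s s', 1 ≤ s → s ≤ s' → s' ≤ t → d s ≤ d s')
    (S : ℝ) (hS : S ∈ Set.Icc (0 : ℝ) 1)
    (m : ℕ → ℝ) :
    (∀ s, 1 ≤ s → s ≤ t → m s = min S (d s)) ↔
    (∃ z : ℕ → ℝ,
      (∀ s, 1 ≤ s → s ≤ t + 1 → (z s = 0 ∨ z s = 1)) ∧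
      (∑ s ∈ Finset.Icc 1 (t + 1), z s) = 1 ∧
      (∑ s ∈ Finset.Icc 1 t, z (s + 1) * d s) ≤ S ∧
      S ≤ (∑ s ∈ Finset.Icc 1 t, z s * d s) + z (t + 1) ∧
      (∀ s' s, 1 ≤ s' → s' ≤ s → s ≤ t →
        -(2 * (1 - z s')) ≤ m s - S ∧ m s - S ≤ 2 * (1 - z s')) ∧
      (∀ s s', 1 ≤ s → s < s' → s' ≤ t + 1 →
        -(2 * (1 - z s')) ≤ m s - d s ∧ m s - d s ≤ 2 * (1 - z s'))) := by
  classical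
  obtain ⟨hS0, hS1⟩ := hS
  constructor
  · intro hm
    have hQex : ∃ n, (1 ≤ n ∧ n ≤ t ∧ S ≤ d n) ∨ n = t + 1 := ⟨t + 1, Or.inr rfl⟩
    set k := Nat.find hQex with hkdef
    have hQk := Nat.find_spec hQex
    have hmin : ∀ j, j < k → ¬((1 ≤ j ∧ j ≤ t ∧ S ≤ d j) ∨ j = t + 1) :=
      fun j hj => Nat.find_min hQex hj
    have hk1 : 1 ≤ k := by rcases hQk with h | h; exact h.1; omega
    have hkt : k ≤ t + 1 := by rcases hQk with h | h; omega; omega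
    have hdk : k ≤ t → S ≤ d k := by
      intro h; rcases hQk with h' | h'; exact h'.2.2; omega
    have hlt : ∀ j, 1 ≤ j → j ≤ t → j < k → d j < S := by
      intro j h1 h2 hj
      by_contra h
      exact hmin j hj (Or.inl ⟨h1, h2, le_of_not_gt h⟩)
    refine ⟨fun s => if s = k then 1 else 0, ?_, ?_, ?_, ?_, ?_, ?_⟩
    · intro s _ _; by_cases h : s = k <;> simp [h]
    · rw [Finset.sum_ite_eq' (Finset.Icc 1 (t + 1)) k (fun _ => (1 : ℝ))]
      simp [Finset.mem_Icc, hk1, hkt]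
    · have heq : ∑ s ∈ Finset.Icc 1 t, (if s + 1 = k then (1 : ℝ) else 0) * d s
          = ∑ s ∈ Finset.Icc 1 t, (if s = k - 1 then d s else 0) := by
        apply Finset.sum_congr rfl
        intro s hs
        simp only [Finset.mem_Icc] at hs
        by_cases h : s + 1 = k
        · have hs1 : s = k - 1 := by omega
          subst hs1
          simp [h]
        · have : s ≠ k - 1 := by omega
          simp [h, this]
      simp only [heq]
      rw [Finset.sum_ite_eq' (Finset.Icc 1 t) (k - 1) d]
      by_cases h2 : 2 ≤ k
      · have hmem : k - 1 ∈ Finset.Icc 1 t := by simp [Finset.mem_Icc]; omega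
        rw [if_pos hmem]
        exact le_of_lt (hlt (k - 1) (by omega) (by omega) (by omega))
      · have hmem : k - 1 ∉ Finset.Icc 1 t := by simp [Finset.mem_Icc]; omega
        rw [if_neg hmem]
        exact hS0
    · have heq : ∑ s ∈ Finset.Icc 1 t, (if s = k then (1 : ℝ) else 0) * d s
          = ∑ s ∈ Finset.Icc 1 t, (if s = k then d s else 0) := by
        apply Finset.sum_congr rfl; intro s _; by_cases h : s = k <;> simp [h]
      simp only [heq]
      rw [Finset.sum_ite_eq' (Finset.Icc 1 t) k d]
      by_cases h : k ≤ t
      · have hmem : k ∈ Finset.Icc 1 t := by simp [Finset.mem_Icc]; omega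
        have : t + 1 ≠ k := by omega
        rw [if_pos hmem, if_neg this]
        have := hdk h
        linarith
      · have hk' : k = t + 1 := by omega
        have hmem : k ∉ Finset.Icc 1 t := by simp [Finset.mem_Icc]; omega
        rw [if_neg hmem, if_pos hk'.symm]
        linarith
    · intro s' s h1 h2 h3
      have hms := hm s (by omega) h3
      by_cases h : s' = k
      · have hSd : S ≤ d s := le_trans (hdk (by omega)) (hsorted k s (by omega) (by omega) h3)
        have : m s = S := by rw [hms, min_eq_left hSd]
        simp [h, this]
      · obtain ⟨hd0, hd1⟩ := hd01 s (by omega) h3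
        have h0 : 0 ≤ min S (d s) := le_min hS0 hd0
        have h1' : min S (d s) ≤ 1 := min_le_of_left_le hS1
        rw [hms]
        simp only [if_neg h]
        constructor <;> linarith
    · intro s s' h1 h2 h3
      have hst : s ≤ t := by omega
      have hms := hm s h1 hst
      obtain ⟨hd0, hd1⟩ := hd01 s h1 hst
      by_cases h : s' = k
      · have hds : d s < S := hlt s h1 hst (by omega)
        have : m s = d s := by rw [hms, min_eq_right (le_of_lt hds)]
        simp [h, this]
      · have h0 : 0 ≤ min S (d s) := le_min hS0 hd0
        have h1' : min S (d s) ≤ 1 := min_le_of_left_le hS1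
        rw [hms]
        simp only [if_neg h]
        constructor <;> linarith
  · rintro ⟨z, hz01, hzsum, hle, hge, hA, hB⟩
    have hnonneg : ∀ j ∈ Finset.Icc 1 (t + 1), 0 ≤ z j := by
      intro j hj
      simp only [Finset.mem_Icc] at hj
      rcases hz01 j hj.1 hj.2 with h | h <;> simp [h]
    have hex : ∃ k ∈ Finset.Icc 1 (t + 1), z k ≠ 0 := by
      apply Finset.exists_ne_zero_of_sum_ne_zero
      rw [hzsum]; norm_num
    obtain ⟨k, hkmem, hkne⟩ := hex
    have hkIcc := Finset.mem_Icc.mp hkmem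
    have hk1 : 1 ≤ k := hkIcc.1
    have hk2 : k ≤ t + 1 := hkIcc.2
    have hzk : z k = 1 := by rcases hz01 k hk1 hk2 with h | h; exact absurd h hkne; exact h
    have hzero : ∀ j, 1 ≤ j → j ≤ t + 1 → j ≠ k → z j = 0 := by
      intro j h1 h2 hne
      rcases hz01 j h1 h2 with h | h
      · exact h
      · exfalso
        have hsub : ({k, j} : Finset ℕ) ⊆ Finset.Icc 1 (t + 1) := by
          intro x hx
          simp only [Finset.mem_insert, Finset.mem_singleton] at hx
          rcases hx with rfl | rfl
          · exact hkmem
          · simp [Finset.mem_Icc]; omega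
        have hpair : ∑ x ∈ ({k, j} : Finset ℕ), z x = 2 := by
          rw [Finset.sum_pair (Ne.symm hne), hzk, h]; norm_num
        have hle2 : (2 : ℝ) ≤ ∑ x ∈ Finset.Icc 1 (t + 1), z x := by
          rw [← hpair]
          apply Finset.sum_le_sum_of_subset_of_nonneg hsub
          intro i hi _
          exact hnonneg i hi
        rw [hzsum] at hle2
        linarith
    -- S ≤ d k when k ≤ t
    have hSdk : k ≤ t → S ≤ d k := by
      intro hkt
      have hsum : ∑ s ∈ Finset.Icc 1 t, z s * d s = d k := by
        rw [Finset.sum_eq_single_of_mem k (by simp [Finset.mem_Icc]; omega)]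
        · rw [hzk, one_mul]
        · intro j hj hne
          simp only [Finset.mem_Icc] at hj
          rw [hzero j hj.1 (by omega) hne, zero_mul]
      have hzt1 : z (t + 1) = 0 := hzero (t + 1) (by omega) le_rfl (by omega)
      rw [hsum, hzt1] at hge
      linarith
    -- d (k-1) ≤ S when k ≥ 2
    have hdkm1 : 2 ≤ k → d (k - 1) ≤ S := by
      intro h2
      have hsum : ∑ s ∈ Finset.Icc 1 t, z (s + 1) * d s = d (k - 1) := by
        rw [Finset.sum_eq_single_of_mem (k - 1) (by simp [Finset.mem_Icc]; omega)]
        · have : k - 1 + 1 = k := by omega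
          rw [this, hzk, one_mul]
        · intro j hj hne
          simp only [Finset.mem_Icc] at hj
          rw [hzero (j + 1) (by omega) (by omega) (by omega), zero_mul]
      rw [hsum] at hle
      exact hle
    intro s h1 h2
    by_cases hks : k ≤ s
    · have hmsS : m s = S := by
        have := hA k s hk1 hks h2
        rw [hzk] at this
        obtain ⟨ha, hb⟩ := this
        norm_num at ha hb
        linarith
      have hSds : S ≤ d s := le_trans (hSdk (by omega)) (hsorted k s hk1 hks h2)
      rw [hmsS, min_eq_left hSds]
    · have hsk : s < k := by omega
      have hmsd : m s = d s := by
        have := hB s k h1 hsk hk2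
        rw [hzk] at this
        obtain ⟨ha, hb⟩ := this
        norm_num at ha hb
        linarith
      have hdsS : d s ≤ S :=
        le_trans (hsorted s (k - 1) h1 (by omega) (by omega)) (hdkm1 (by omega))
      rw [hmsd, min_eq_right hdsS]
end
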